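/- arXiv:1607.00254 — 4 statements merged into one kernel-verified Lean document; each statement's English description precedes it below -/
import Mathlib

section
/- Let V ↪ H be Hilbert spaces with V densely and continuously embedded in H, let a : V × V → ℂ be a bounded coercive sesquilinear form with associated operator A on H, and let b : H × H → ℂ be a bounded coercive sesquilinear form with associated operator C and B := C⁻¹. Define A_b with domain D(A_b) = {u ∈ V : ∃ v ∈ H, ∀ φ ∈ V, a(u,φ) = b(v,φ)} and A_b u := v. Then A_b is well defined (the element v is unique), D(A_b) = D(A), and A_b = B A. -/
/-! Since `b v (ι φ) = ⟪ι φ, C v⟫`, an element `v` represents `a u ·` through `b` exactly when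
`C v` represents it through the inner product of `H`. The latter representative is unique because
`ι` has dense range, and `C` is invertible with inverse `B`. -/

theorem operator_wrt_form_eq_BA_general
    {H V : Type*}
    [NormedAddCommGroup H] [InnerProductSpace ℂ H]
    [NormedAddCommGroup V] [InnerProductSpace ℂ V]
    (ι : V →L[ℂ] H) (hdense : DenseRange ι)
    (a : V → V → ℂ)
    (b : H → H → ℂ)
    (C B : H →L[ℂ] H)
    (hassoc : ∀ u v : H, b u v = (inner ℂ v (C u) : ℂ))
    (hB1 : C.comp B = ContinuousLinearMap.id ℂ H)
    (hB2 : B.comp C = ContinuousLinearMap.id ℂ H) :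
    -- `A_b` is well defined: the element `v` is unique
    (∀ (u : V) (v v' : H), (∀ φ : V, a u φ = b v (ι φ)) →
        (∀ φ : V, a u φ = b v' (ι φ)) → v = v') ∧
    -- `D(A_b) = D(A)`
    (∀ u : V, (∃ v : H, ∀ φ : V, a u φ = b v (ι φ)) ↔
        (∃ h : H, ∀ φ : V, a u φ = (inner ℂ (ι φ) h : ℂ))) ∧
    -- `A_b = B A` : if `Au = h` and `A_b u = v` then `v = B h`
    (∀ (u : V) (v h : H), (∀ φ : V, a u φ = b v (ι φ)) →
        (∀ φ : V, a u φ = (inner ℂ (ι φ) h : ℂ)) → v = B h) := by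
  have hBC (x : H) : B (C x) = x := congr($hB2 x)
  have hCB (x : H) : C (B x) = x := congr($hB1 x)
  have hrep (u : V) (v : H) :
      (∀ φ, a u φ = b v (ι φ)) ↔ ∀ φ, a u φ = (inner ℂ (ι φ) (C v) : ℂ) := by
    simp only [hassoc]
  have hrep_unique (u : V) (h h' : H) (hh : ∀ φ, a u φ = (inner ℂ (ι φ) h : ℂ))
      (hh' : ∀ φ, a u φ = (inner ℂ (ι φ) h' : ℂ)) : h = h' :=
    hdense.eq_of_inner_right ℂ fun φ => (hh φ).symm.trans (hh' φ)
  have hAb_eq (u : V) (v h : H) (hv : ∀ φ, a u φ = b v (ι φ))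
      (hh : ∀ φ, a u φ = (inner ℂ (ι φ) h : ℂ)) : v = B h := by
    rw [← hrep_unique u _ h ((hrep u v).1 hv) hh, hBC]
  refine ⟨fun u v v' hv hv' => ?_, fun u => ⟨?_, ?_⟩, hAb_eq⟩
  · rw [hAb_eq u v' (C v) hv' ((hrep u v).1 hv), hBC]
  · rintro ⟨v, hv⟩
    exact ⟨C v, (hrep u v).1 hv⟩
  · rintro ⟨h, hh⟩
    exact ⟨B h, (hrep u (B h)).2 (by simpa only [hCB] using hh)⟩

/-- Let `V ↪ H` be Hilbert spaces with `V` densely and continuously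
embedded in `H` (via `ι`), let `a` be a bounded coercive sesquilinear form on `V` with
associated operator `A` on `H` (`u ∈ D(A)` iff `∃ h, ∀ φ, a(u,φ) = (h,φ)`, `Au = h`),
and let `b` be a bounded coercive sesquilinear form on `H` with associated operator `C`
and `B := C⁻¹`.  Define `A_b` by `D(A_b) = {u ∈ V : ∃ v ∈ H, ∀ φ ∈ V, a(u,φ) = b(v,φ)}`,
`A_b u := v`.  Then `A_b` is well defined (the element `v` is unique), `D(A_b) = D(A)`,
and `A_b = B A`. -/
theorem operator_wrt_form_eq_BA
    {H V : Type*}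
    [NormedAddCommGroup H] [InnerProductSpace ℂ H] [CompleteSpace H]
    [NormedAddCommGroup V] [InnerProductSpace ℂ V] [CompleteSpace V]
    (ι : V →L[ℂ] H) (hι : Function.Injective ι) (hdense : DenseRange ι)
    (a : V → V → ℂ) (M δa : ℝ) (hδa : 0 < δa)
    (hM : ∀ u v : V, ‖a u v‖ ≤ M * ‖u‖ * ‖v‖)
    (hcoerA : ∀ u : V, δa * ‖u‖ ^ 2 ≤ (a u u).re)
    (b : H → H → ℂ) (Mb δb : ℝ) (hδb : 0 < δb)
    (hMb : ∀ u v : H, ‖b u v‖ ≤ Mb * ‖u‖ * ‖v‖)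
    (hcoerB : ∀ u : H, δb * ‖u‖ ^ 2 ≤ (b u u).re)
    (C B : H →L[ℂ] H)
    (hassoc : ∀ u v : H, b u v = (inner ℂ v (C u) : ℂ))
    (hB1 : C.comp B = ContinuousLinearMap.id ℂ H)
    (hB2 : B.comp C = ContinuousLinearMap.id ℂ H) :
    -- `A_b` is well defined: the element `v` is unique
    (∀ (u : V) (v v' : H), (∀ φ : V, a u φ = b v (ι φ)) →
        (∀ φ : V, a u φ = b v' (ι φ)) → v = v') ∧
    -- `D(A_b) = D(A)`
    (∀ u : V, (∃ v : H, ∀ φ : V, a u φ = b v (ι φ)) ↔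
        (∃ h : H, ∀ φ : V, a u φ = (inner ℂ (ι φ) h : ℂ))) ∧
    -- `A_b = B A` : if `Au = h` and `A_b u = v` then `v = B h`
    (∀ (u : V) (v h : H), (∀ φ : V, a u φ = b v (ι φ)) →
        (∀ φ : V, a u φ = (inner ℂ (ι φ) h : ℂ)) → v = B h) :=
  operator_wrt_form_eq_BA_general ι hdense a b C B hassoc hB1 hB2
end

section
/- Let A be a (possibly unbounded) operator on a Hilbert space H whose numerical range lies in the closed sector Σ(w₀) = {z ∈ ℂ* : |arg z| ≤ w₀}, and let B be a bounded invertible operator with (B⁻¹u,u) ∈ Σ(w₁) for all u ≠ 0, where Re (B⁻¹u,u) ≥ δ‖u‖², δ > 0. Then for every u ∈ D(A) with u ≠ 0 and every λ ∉ Σ(w₀+w₁) one has ‖(λI − BA)u‖ ≥ (δ/‖B⁻¹‖) · dist(λ, Σ(w₀+w₁)) · ‖u‖. -/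
/-!
Writing `α = (u, Au)` and `β = (u, B⁻¹u)`, the vector `v = (λ - BA)u` satisfies
`(u, B⁻¹v) = λβ - α = β (λ - α/β)`. Arguments add under division, so `α/β ∈ Σ(w₀+w₁)` and
`|λ - α/β| ≥ dist(λ, Σ(w₀+w₁))`, while `|β| ≥ Re β ≥ δ‖u‖²`. Cauchy–Schwarz bounds
`|(u, B⁻¹v)|` by `‖u‖ ‖B⁻¹‖ ‖v‖`, and dividing by `‖u‖ ‖B⁻¹‖` gives the estimate.
-/

open Real

noncomputable section

/-- The closed sector `Σ(w) = {z ∈ ℂ* : |arg z| ≤ w}`. -/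
def Sector (w : ℝ) : Set ℂ := {z : ℂ | z ≠ 0 ∧ |z.arg| ≤ w}

lemma Real.Angle.abs_toReal_coe_le (θ : ℝ) : |(θ : Real.Angle).toReal| ≤ |θ| := by
  by_cases hθ : -π < θ ∧ θ ≤ π
  · rw [Real.Angle.toReal_coe_eq_self_iff.mpr hθ]
  · have hπ : π ≤ |θ| := by
      rw [not_and_or, not_lt, not_le] at hθ
      rcases hθ with hθ | hθ
      · exact le_abs.mpr (Or.inr (by linarith))
      · exact le_abs.mpr (Or.inl hθ.le)
    exact (Real.Angle.abs_toReal_le_pi _).trans hπ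

lemma Complex.abs_arg_div_le {x y : ℂ} (hx : x ≠ 0) (hy : y ≠ 0) :
    |(x / y).arg| ≤ |x.arg| + |y.arg| := by
  rw [← Complex.arg_coe_angle_toReal_eq_arg, Complex.arg_div_coe_angle hx hy,
    ← Real.Angle.coe_sub]
  exact (Real.Angle.abs_toReal_coe_le _).trans (abs_sub _ _)

lemma div_mem_sector {a b : ℝ} {x y : ℂ} (hx : x ∈ Sector a) (hy : y ∈ Sector b) :
    x / y ∈ Sector (a + b) :=
  ⟨div_ne_zero hx.1 hy.1, (Complex.abs_arg_div_le hx.1 hy.1).trans (add_le_add hx.2 hy.2)⟩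

lemma norm_mul_infDist_le_norm_mul_sub {S : Set ℂ} {α β : ℂ} (hS : α / β ∈ S) (lam : ℂ) :
    ‖β‖ * Metric.infDist lam S ≤ ‖lam * β - α‖ := by
  rcases eq_or_ne β 0 with rfl | hβ
  · simp
  calc ‖β‖ * Metric.infDist lam S ≤ ‖β‖ * ‖lam - α / β‖ := by
        gcongr
        simpa [Complex.dist_eq] using Metric.infDist_le_dist_of_mem hS
    _ = ‖lam * β - α‖ := by
        rw [← norm_mul]
        congr 1
        field_simp

lemma inner_apply_smul_sub_of_comp_eq_id {H : Type*} [NormedAddCommGroup H]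
    [InnerProductSpace ℂ H] {B Binv : H →L[ℂ] H} (hB : Binv.comp B = ContinuousLinearMap.id ℂ H)
    (lam : ℂ) (u w : H) :
    inner ℂ u (Binv (lam • u - B w)) = lam * inner ℂ u (Binv u) - inner ℂ u w := by
  have hBw : Binv (B w) = w := by simpa using congrArg (fun T : H →L[ℂ] H => T w) hB
  simp [hBw]

theorem sector_lower_estimate_general
    {H : Type*} [NormedAddCommGroup H] [InnerProductSpace ℂ H]
    (D : Submodule ℂ H) (A : D →ₗ[ℂ] H)
    (w0 w1 δ : ℝ)
    (hA : ∀ u : D, (u : H) ≠ 0 → (inner ℂ (u : H) (A u) : ℂ) ∈ Sector w0)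
    (B Binv : H →L[ℂ] H)
    (hB2 : Binv.comp B = ContinuousLinearMap.id ℂ H)
    (hBcoer : ∀ u : H, δ * ‖u‖ ^ 2 ≤ ((inner ℂ u (Binv u) : ℂ)).re)
    (hBrange : ∀ u : H, u ≠ 0 → (inner ℂ u (Binv u) : ℂ) ∈ Sector w1) :
    ∀ u : D, (u : H) ≠ 0 → ∀ lam : ℂ, lam ∉ closure (Sector (w0 + w1)) →
      δ / ‖Binv‖ * Metric.infDist lam (Sector (w0 + w1)) * ‖(u : H)‖ ≤
        ‖lam • (u : H) - B (A u)‖ := by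
  intro u hu lam _
  set d := Metric.infDist lam (Sector (w0 + w1))
  set v := lam • (u : H) - B (A u)
  have hquot := div_mem_sector (hA u hu) (hBrange u hu)
  have hβ : δ * ‖(u : H)‖ ^ 2 ≤ ‖inner ℂ (u : H) (Binv u)‖ :=
    (hBcoer u).trans (Complex.re_le_norm _)
  have hkey : ‖(u : H)‖ * (δ * d * ‖(u : H)‖) ≤ ‖(u : H)‖ * (‖Binv‖ * ‖v‖) :=
    calc ‖(u : H)‖ * (δ * d * ‖(u : H)‖) = δ * ‖(u : H)‖ ^ 2 * d := by ring
      _ ≤ ‖inner ℂ (u : H) (Binv u)‖ * d := by gcongr; exact Metric.infDist_nonneg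
      _ ≤ ‖inner ℂ (u : H) (Binv v)‖ := by
          rw [inner_apply_smul_sub_of_comp_eq_id hB2]
          exact norm_mul_infDist_le_norm_mul_sub hquot lam
      _ ≤ ‖(u : H)‖ * ‖Binv v‖ := norm_inner_le_norm _ _
      _ ≤ ‖(u : H)‖ * (‖Binv‖ * ‖v‖) := by gcongr; exact Binv.le_opNorm v
  have hest := le_of_mul_le_mul_left hkey (norm_pos_iff.mpr hu)
  rw [div_mul_eq_mul_div, div_mul_eq_mul_div]
  exact div_le_of_le_mul₀ (norm_nonneg _) (norm_nonneg _) (by linarith)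

/-- Let `A` be an operator on a Hilbert space `H` with numerical range in
`Σ(w₀)`, and `B` a bounded invertible operator with numerical range of `B⁻¹` in `Σ(w₁)`
and `Re (B⁻¹u,u) ≥ δ‖u‖²`, `δ > 0`.  Then for every `u ∈ D(A)`, `u ≠ 0`, and every
`λ ∉ Σ(w₀+w₁)`:  `‖(λI − BA)u‖ ≥ (δ/‖B⁻¹‖) · dist(λ, Σ(w₀+w₁)) · ‖u‖`. -/
theorem sector_lower_estimate
    {H : Type*} [NormedAddCommGroup H] [InnerProductSpace ℂ H] [CompleteSpace H]
    (D : Submodule ℂ H) (A : D →ₗ[ℂ] H)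
    (w0 w1 δ : ℝ)
    (hw0 : 0 ≤ w0) (hw0' : w0 < π / 2) (hw1 : 0 ≤ w1) (hw1' : w1 < π / 2)
    (hδ : 0 < δ)
    (hA : ∀ u : D, (u : H) ≠ 0 → (inner ℂ (u : H) (A u) : ℂ) ∈ Sector w0)
    (B Binv : H →L[ℂ] H)
    (hB1 : B.comp Binv = ContinuousLinearMap.id ℂ H)
    (hB2 : Binv.comp B = ContinuousLinearMap.id ℂ H)
    (hBcoer : ∀ u : H, δ * ‖u‖ ^ 2 ≤ ((inner ℂ u (Binv u) : ℂ)).re)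
    (hBrange : ∀ u : H, u ≠ 0 → (inner ℂ u (Binv u) : ℂ) ∈ Sector w1) :
    ∀ u : D, (u : H) ≠ 0 → ∀ lam : ℂ, lam ∉ closure (Sector (w0 + w1)) →
      δ / ‖Binv‖ * Metric.infDist lam (Sector (w0 + w1)) * ‖(u : H)‖ ≤
        ‖lam • (u : H) - B (A u)‖ :=
  sector_lower_estimate_general D A w0 w1 δ hA B Binv hB2 hBcoer hBrange
end
end

section
/- There exist operators A and B on L₂(ℝ^d) such that A has numerical range in a sector of angle π/3, B is bounded, invertible with B⁻¹ having numerical range in a sector of angle π/3, but −BA does not generate a C₀-semigroup. Concretely, with A = −e^{iπ/3}Δ and B multiplication by e^{iπ/3}, the operator −BA = e^{2iπ/3}Δ is not a generator of a C₀-semigroup on L₂(ℝ^d). -/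
open Real Complex

noncomputable section

/-- A `C₀`-semigroup on `H`. -/
def IsC0Semigroup {H : Type*} [NormedAddCommGroup H] [NormedSpace ℂ H]
    (T : ℝ → H →L[ℂ] H) : Prop :=
  T 0 = ContinuousLinearMap.id ℂ H ∧
  (∀ s t : ℝ, 0 ≤ s → 0 ≤ t → T (s + t) = (T s).comp (T t)) ∧
  (∀ x : H, Filter.Tendsto (fun t => T t x) (nhdsWithin 0 (Set.Ici 0)) (nhds x))

/-! A `C₀`-semigroup is bounded, say by `M`, on some interval `[0, δ]` (Banach–Steinhaus). If the
orbit of `x` has right derivative `y` at `0`, then `t ↦ e^{-zt} T(t) x` has right derivative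
`e^{-zt} T(t) (y - z x)`, and the mean value inequality on `[0, δ]` gives
`‖x‖ ≤ M δ ‖y - z x‖ + e^{-δ Re z} M ‖x‖`. Hence `‖y - z x‖ ≥ c ‖x‖` once `Re z` is large: the
approximate eigenvalues of a generator have real parts bounded above. But `e^{2iπ/3} Δ` has the
approximate eigenvalues `e^{2iπ/3} μ`, `μ ≤ 0`, whose real parts `-μ/2` are unbounded.

The sector conditions are direct: `⟪x, -e^{iπ/3} Δ x⟫ = -⟪x, Δ x⟫ e^{iπ/3}` and
`⟪u, e^{-iπ/3} u⟫ = ‖u‖² e^{-iπ/3}` are positive multiples of `e^{±iπ/3}`. -/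

theorem exp_ofReal_mul_I_mem_sector {θ w : ℝ} (hθ : θ ∈ Set.Ioc (-π) π) (hw : |θ| ≤ w) :
    Complex.exp (θ * I) ∈ Sector w := by
  refine ⟨Complex.exp_ne_zero _, ?_⟩
  rwa [Complex.exp_mul_I, Complex.arg_cos_add_sin_mul_I hθ]

theorem ofReal_mul_mem_sector {w r : ℝ} {c : ℂ} (hr : 0 < r) (hc : c ∈ Sector w) :
    (r : ℂ) * c ∈ Sector w :=
  ⟨mul_ne_zero (ofReal_ne_zero.mpr hr.ne') hc.1, by rw [Complex.arg_real_mul c hr]; exact hc.2⟩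

theorem inner_self_smul_mem_sector {H : Type*} [NormedAddCommGroup H] [InnerProductSpace ℂ H]
    {w : ℝ} {c : ℂ} (hc : c ∈ Sector w) {u : H} (hu : u ≠ 0) :
    (inner ℂ u (c • u) : ℂ) ∈ Sector w := by
  rw [inner_smul_right, inner_self_eq_norm_sq_to_K, mul_comm]
  have h := ofReal_mul_mem_sector (r := ‖u‖ ^ 2) (by positivity) hc
  push_cast at h
  exact h

theorem inner_neg_smul_mem_sector {H : Type*} [NormedAddCommGroup H] [InnerProductSpace ℂ H]
    {w : ℝ} {c : ℂ} (hc : c ∈ Sector w) {u v : H} (him : (inner ℂ u v : ℂ).im = 0)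
    (hre : (inner ℂ u v : ℂ).re < 0) : (inner ℂ u (-c • v) : ℂ) ∈ Sector w := by
  have hreal : (inner ℂ u v : ℂ) = ((inner ℂ u v : ℂ).re : ℂ) := Complex.ext rfl (by simp [him])
  rw [inner_smul_right, hreal, neg_mul, mul_comm, ← neg_mul, ← ofReal_neg]
  exact ofReal_mul_mem_sector (neg_pos.mpr hre) hc

theorem exp_pi_mul_I_div_three_mem_sector : Complex.exp (π * I / 3) ∈ Sector (π / 3) := by
  rw [show (π * I / 3 : ℂ) = ((π / 3 : ℝ) : ℂ) * I by push_cast; ring]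
  exact exp_ofReal_mul_I_mem_sector ⟨by linarith [pi_pos], by linarith [pi_pos]⟩
    (abs_of_pos (by positivity)).le

theorem inv_exp_pi_mul_I_div_three_mem_sector :
    (Complex.exp (π * I / 3))⁻¹ ∈ Sector (π / 3) := by
  rw [← Complex.exp_neg, show -(π * I / 3 : ℂ) = ((-(π / 3) : ℝ) : ℂ) * I by push_cast; ring]
  exact exp_ofReal_mul_I_mem_sector ⟨by linarith [pi_pos], by linarith [pi_pos]⟩
    (by rw [abs_neg, abs_of_pos (by positivity)])

theorem re_exp_two_pi_mul_I_div_three : (Complex.exp (2 * π * I / 3)).re = -(1 / 2) := by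
  rw [show (2 * π * I / 3 : ℂ) = ((π - π / 3 : ℝ) : ℂ) * I by push_cast; ring,
    Complex.exp_ofReal_mul_I_re, Real.cos_pi_sub, Real.cos_pi_div_three]

def IsApproxEigenvalue {H : Type*} [NormedAddCommGroup H] [Module ℂ H] {D : Submodule ℂ H}
    (G : D →ₗ[ℂ] H) (z : ℂ) : Prop :=
  ∀ ε > 0, ∃ x : D, ‖(x : H)‖ = 1 ∧ ‖G x - z • (x : H)‖ < ε

theorem IsApproxEigenvalue.smul {H : Type*} [NormedAddCommGroup H] [NormedSpace ℂ H]
    {D : Submodule ℂ H} {G : D →ₗ[ℂ] H} {z : ℂ} (hz : IsApproxEigenvalue G z) (ω : ℂ) :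
    IsApproxEigenvalue (ω • G) (ω * z) := by
  intro ε hε
  obtain ⟨x, hx, hxz⟩ := hz (ε / (‖ω‖ + 1)) (by positivity)
  refine ⟨x, hx, ?_⟩
  rw [lt_div_iff₀ (by positivity)] at hxz
  calc ‖(ω • G) x - (ω * z) • (x : H)‖ = ‖ω‖ * ‖G x - z • (x : H)‖ := by
        rw [LinearMap.smul_apply, mul_smul, ← smul_sub, norm_smul]
    _ ≤ ‖G x - z • (x : H)‖ * (‖ω‖ + 1) := by nlinarith [norm_nonneg (G x - z • (x : H))]
    _ < ε := hxz

namespace IsC0Semigroup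

variable {H : Type*} [NormedAddCommGroup H] [NormedSpace ℂ H] {T : ℝ → H →L[ℂ] H}

theorem exists_forall_Icc_norm_le [CompleteSpace H] (hT : IsC0Semigroup T) :
    ∃ δ > 0, ∃ M > 0, ∀ t ∈ Set.Icc 0 δ, ‖T t‖ ≤ M := by
  by_contra! hunbdd
  choose t ht hlt using fun n : ℕ => hunbdd (1 / ((n : ℝ) + 1)) (by positivity) (n + 1)
    (by positivity)
  have ht_tendsto : Filter.Tendsto t Filter.atTop (nhdsWithin 0 (Set.Ici 0)) :=
    tendsto_nhdsWithin_of_tendsto_nhds_of_eventually_within _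
      (squeeze_zero (fun n => (ht n).1) (fun n => (ht n).2)
        tendsto_one_div_add_atTop_nhds_zero_nat)
      (Filter.Eventually.of_forall fun n => (ht n).1)
  have hbdd : ∀ x : H, ∃ C, ∀ n, ‖T (t n) x‖ ≤ C := fun x => by
    obtain ⟨C, hC⟩ := (((hT.2.2 x).comp ht_tendsto).norm).bddAbove_range
    exact ⟨C, fun n => hC (Set.mem_range_self n)⟩
  obtain ⟨C, hC⟩ := banach_steinhaus hbdd
  obtain ⟨n, hn⟩ := exists_nat_gt C
  linarith [hC n, hlt n]

theorem norm_apply_sub_apply_le (hT : IsC0Semigroup T) {δ M : ℝ}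
    (hM : ∀ t ∈ Set.Icc 0 δ, ‖T t‖ ≤ M) (x : H) {s t : ℝ} (hs : 0 ≤ s) (hst : s ≤ t)
    (ht : t ≤ δ) : ‖T t x - T s x‖ ≤ M * ‖T (t - s) x - x‖ := by
  have hsplit : T t x - T s x = T s (T (t - s) x - x) := by
    rw [map_sub, ← ContinuousLinearMap.comp_apply, ← hT.2.1 s (t - s) hs (by linarith),
      add_sub_cancel]
  rw [hsplit]
  exact (T s).le_of_opNorm_le (hM s ⟨hs, hst.trans ht⟩) _

theorem continuousOn_apply (hT : IsC0Semigroup T) {δ M : ℝ}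
    (hM : ∀ t ∈ Set.Icc 0 δ, ‖T t‖ ≤ M) (x : H) :
    ContinuousOn (fun t => T t x) (Set.Icc 0 δ) := by
  intro s hs
  have hdist : Filter.Tendsto (fun t : ℝ => |t - s|) (nhdsWithin s (Set.Icc 0 δ))
      (nhdsWithin 0 (Set.Ici 0)) :=
    tendsto_nhdsWithin_of_tendsto_nhds_of_eventually_within _
      ((continuous_abs.comp (continuous_sub_right s)).tendsto' s 0 (by simp)
        |>.mono_left nhdsWithin_le_nhds)
      (Filter.Eventually.of_forall fun t => Set.mem_Ici.mpr (abs_nonneg _))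
  have hbound : Filter.Tendsto (fun t : ℝ => M * ‖T |t - s| x - x‖)
      (nhdsWithin s (Set.Icc 0 δ)) (nhds 0) := by
    simpa [Function.comp_def] using
      ((((hT.2.2 x).sub (tendsto_const_nhds (x := x))).norm).const_mul M).comp hdist
  refine tendsto_iff_norm_sub_tendsto_zero.mpr <|
    squeeze_zero' (Filter.Eventually.of_forall fun t => norm_nonneg _) ?_ hbound
  filter_upwards [self_mem_nhdsWithin] with t ht
  rcases le_total s t with hst | hts
  · rw [abs_of_nonneg (sub_nonneg.mpr hst)]
    exact hT.norm_apply_sub_apply_le hM x hs.1 hst ht.2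
  · rw [abs_sub_comm, abs_of_nonneg (sub_nonneg.mpr hts), norm_sub_rev]
    exact hT.norm_apply_sub_apply_le hM x ht.1 hts hs.2

theorem hasDerivWithinAt_apply (hT : IsC0Semigroup T) {x y : H}
    (hx : HasDerivWithinAt (fun t => T t x) y (Set.Ici 0) 0) {t : ℝ} (ht : 0 ≤ t) :
    HasDerivWithinAt (fun r => T r x) (T t y) (Set.Ici t) t := by
  have hshift : HasDerivWithinAt (fun r : ℝ => r - t) 1 (Set.Ici t) t := by
    simpa using (hasDerivWithinAt_id t (Set.Ici t)).sub_const t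
  have hmaps : Set.MapsTo (fun r : ℝ => r - t) (Set.Ici t) (Set.Ici 0) :=
    fun r hr => Set.mem_Ici.mpr (sub_nonneg.mpr hr)
  have hcomp := ((T t).restrictScalars ℝ).hasFDerivAt.comp_hasDerivWithinAt 0 hx
    |>.scomp_of_eq t hshift hmaps (sub_self t).symm
  rw [one_smul] at hcomp
  refine hcomp.congr (fun r hr => ?_) ?_
  · simp only [Function.comp_apply, ContinuousLinearMap.coe_restrictScalars']
    rw [← ContinuousLinearMap.comp_apply, ← hT.2.1 t (r - t) ht (sub_nonneg.mpr hr),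
      add_sub_cancel]
  · simp [hT.1]

theorem norm_exp_smul_apply_sub_le (hT : IsC0Semigroup T) {δ M ε : ℝ} (hδ : 0 ≤ δ)
    (hM : ∀ t ∈ Set.Icc 0 δ, ‖T t‖ ≤ M) {x y : H}
    (hx : HasDerivWithinAt (fun t => T t x) y (Set.Ici 0) 0) {z : ℂ} (hz : 0 ≤ z.re)
    (hε : ‖y - z • x‖ ≤ ε) :
    ‖Complex.exp (-(z * δ)) • T δ x - x‖ ≤ M * ε * δ := by
  set g : ℝ → H := fun s => Complex.exp (-(z * s)) • T s x
  have hg_cont : ContinuousOn g (Set.Icc 0 δ) :=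
    (by fun_prop : Continuous fun s : ℝ => Complex.exp (-(z * s))).continuousOn.smul
      (hT.continuousOn_apply hM x)
  have hg_deriv : ∀ t ∈ Set.Ico 0 δ,
      HasDerivWithinAt g (Complex.exp (-(z * t)) • T t (y - z • x)) (Set.Ici t) t := by
    intro t ht
    have hexp :
        HasDerivAt (fun s : ℝ => Complex.exp (-(z * s))) (Complex.exp (-(z * t)) * -z) t := by
      simpa using ((hasDerivAt_id t).ofReal_comp.const_mul z).neg.cexp
    refine (hexp.hasDerivWithinAt.smul (hT.hasDerivWithinAt_apply hx ht.1)).congr_deriv ?_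
    rw [map_sub, map_smul]
    module
  have hg_bound : ∀ t ∈ Set.Ico 0 δ, ‖Complex.exp (-(z * t)) • T t (y - z • x)‖ ≤ M * ε := by
    intro t ht
    have hdecay : ‖Complex.exp (-(z * t))‖ ≤ 1 := by
      rw [Complex.norm_exp, Real.exp_le_one_iff]
      simpa using mul_nonneg hz ht.1
    have hM' : ‖T t‖ ≤ M := hM t ⟨ht.1, ht.2.le⟩
    rw [norm_smul]
    calc ‖Complex.exp (-(z * t))‖ * ‖T t (y - z • x)‖ ≤ 1 * (M * ε) :=
          mul_le_mul hdecay ((T t).le_of_opNorm_le_of_le hM' hε) (norm_nonneg _) zero_le_one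
      _ = M * ε := one_mul _
  simpa [g, hT.1] using
    norm_image_sub_le_of_norm_deriv_right_le_segment hg_cont hg_deriv hg_bound δ ⟨hδ, le_rfl⟩

theorem exists_mul_norm_le_norm_sub_smul [CompleteSpace H] (hT : IsC0Semigroup T) :
    ∃ R : ℝ, ∃ c > 0, ∀ z : ℂ, R ≤ z.re → ∀ x y : H,
      HasDerivWithinAt (fun t => T t x) y (Set.Ici 0) 0 → c * ‖x‖ ≤ ‖y - z • x‖ := by
  obtain ⟨δ, hδ, M, hM0, hM⟩ := hT.exists_forall_Icc_norm_le
  refine ⟨2 * M / δ, 1 / (2 * M * δ), by positivity, fun z hz x y hx => ?_⟩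
  have hz0 : 0 ≤ z.re := le_trans (by positivity) hz
  have hdecay : Real.exp (-(z.re * δ)) * M ≤ 1 / 2 := by
    have hgrowth : 2 * M + 1 ≤ Real.exp (z.re * δ) :=
      calc 2 * M + 1 = 2 * M / δ * δ + 1 := by field_simp
        _ ≤ z.re * δ + 1 := by gcongr
        _ ≤ Real.exp (z.re * δ) := Real.add_one_le_exp _
    rw [Real.exp_neg, inv_mul_eq_div, div_le_iff₀ (Real.exp_pos _)]
    linarith
  have hmvt := hT.norm_exp_smul_apply_sub_le hδ.le hM hx hz0 le_rfl
  have hendpoint : ‖Complex.exp (-(z * δ)) • T δ x‖ ≤ Real.exp (-(z.re * δ)) * M * ‖x‖ := by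
    rw [norm_smul, Complex.norm_exp, mul_assoc, show (-(z * δ)).re = -(z.re * δ) by simp]
    exact mul_le_mul_of_nonneg_left ((T δ).le_of_opNorm_le (hM δ ⟨hδ.le, le_rfl⟩) x)
      (Real.exp_pos _).le
  have htriangle := norm_le_norm_add_norm_sub (Complex.exp (-(z * δ)) • T δ x) x
  rw [div_mul_eq_mul_div, one_mul, div_le_iff₀ (by positivity)]
  nlinarith [norm_nonneg x]

end IsC0Semigroup

theorem not_exists_isC0Semigroup_of_isApproxEigenvalue_re_unbounded {H : Type*}
    [NormedAddCommGroup H] [NormedSpace ℂ H] [CompleteSpace H] {D : Submodule ℂ H}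
    (G : D →ₗ[ℂ] H) (hG : ∀ R : ℝ, ∃ z : ℂ, R ≤ z.re ∧ IsApproxEigenvalue G z) :
    ¬ ∃ T : ℝ → H →L[ℂ] H, IsC0Semigroup T ∧
      ∀ x : D, HasDerivWithinAt (fun t => T t (x : H)) (G x) (Set.Ici 0) 0 := by
  rintro ⟨T, hT, hgen⟩
  obtain ⟨R, c, hc, hbound⟩ := hT.exists_mul_norm_le_norm_sub_smul
  obtain ⟨z, hz, hzG⟩ := hG R
  obtain ⟨x, hx, hxz⟩ := hzG c hc
  have := hbound z hz x (G x) (hgen x)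
  rw [hx, mul_one] at this
  exact this.not_gt hxz

/-- One cannot remove the assumption `w₀ + w₁ < π/2`: with
`Δ` the (negative semi-definite, self-adjoint) Laplacian on `H = L₂(ℝ^d)` with domain
`H²(ℝ^d)` — abstractly, a symmetric operator with `(Δx,x) < 0` for `x ≠ 0` whose
approximate point spectrum contains `(−∞,0]` — the operators `A = −e^{iπ/3}Δ` and
`B = e^{iπ/3}I` satisfy: the numerical range of `A` lies in the sector of angle `π/3`,
`B` is bounded invertible with the numerical range of `B⁻¹` in the sector of angle `π/3`,
but `−BA = e^{2iπ/3}Δ` does not generate a `C₀`-semigroup on `H`. -/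
theorem no_C0_semigroup_counterexample
    {H : Type*} [NormedAddCommGroup H] [InnerProductSpace ℂ H] [CompleteSpace H]
    (D : Submodule ℂ H) (Δ : D →ₗ[ℂ] H)
    (hsym : ∀ x : D, ((inner ℂ (x : H) (Δ x) : ℂ)).im = 0)
    (hneg : ∀ x : D, (x : H) ≠ 0 → ((inner ℂ (x : H) (Δ x) : ℂ)).re < 0)
    (happrox : ∀ μ : ℝ, μ ≤ 0 → ∀ ε > 0, ∃ x : D, ‖(x : H)‖ = 1 ∧
      ‖Δ x - (μ : ℂ) • (x : H)‖ < ε) :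
    ∃ (A : D →ₗ[ℂ] H) (B Binv : H →L[ℂ] H),
      (∀ x : D, A x = -(Complex.exp (π * I / 3)) • Δ x) ∧
      B = Complex.exp (π * I / 3) • ContinuousLinearMap.id ℂ H ∧
      B.comp Binv = ContinuousLinearMap.id ℂ H ∧
      Binv.comp B = ContinuousLinearMap.id ℂ H ∧
      (∀ x : D, (x : H) ≠ 0 → (inner ℂ (x : H) (A x) : ℂ) ∈ Sector (π / 3)) ∧
      (∀ u : H, u ≠ 0 → (inner ℂ u (Binv u) : ℂ) ∈ Sector (π / 3)) ∧
      ¬ ∃ T : ℝ → H →L[ℂ] H, IsC0Semigroup T ∧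
          ∀ x : D, HasDerivWithinAt (fun t => T t (x : H))
            (Complex.exp (2 * π * I / 3) • Δ x) (Set.Ici 0) 0 := by
  set c : ℂ := Complex.exp (π * I / 3)
  have hc0 : c ≠ 0 := Complex.exp_ne_zero _
  refine ⟨(-c) • Δ, c • ContinuousLinearMap.id ℂ H, c⁻¹ • ContinuousLinearMap.id ℂ H,
    fun x => rfl, rfl, by ext u; simp [smul_smul, hc0], by ext u; simp [smul_smul, hc0],
    fun x hx => inner_neg_smul_mem_sector exp_pi_mul_I_div_three_mem_sector (hsym x) (hneg x hx),
    fun u hu => inner_self_smul_mem_sector inv_exp_pi_mul_I_div_three_mem_sector hu,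
    not_exists_isC0Semigroup_of_isApproxEigenvalue_re_unbounded _ fun R =>
      ⟨_, ?_, IsApproxEigenvalue.smul (happrox (-2 * |R|) (by linarith [abs_nonneg R])) _⟩⟩
  rw [mul_comm, re_ofReal_mul, re_exp_two_pi_mul_I_div_three]
  linarith [le_abs_self R]
end
end

section
/- Let A be an invertible operator associated with a bounded coercive sesquilinear form a on V ↪ H, with coercivity constant δ. Then for λ in a sector of resolvent boundedness (i.e. ‖(λI−A)⁻¹‖ ≤ C/|λ| and ‖A(λI−A)⁻¹‖ ≤ C'), one has ‖(λI−A)⁻¹‖_{L(D(A), V)} ≤ C''/|λ|, where D(A) carries the graph norm; in particular δ‖(λI−A)⁻¹f‖_V² ≤ ‖(λI−A)⁻¹Af‖·‖(λI−A)⁻¹f‖ for f ∈ D(A). -/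
/-! Testing `a(w, ·)` against `w` itself turns coercivity into `δ‖w‖² ≤ Re ⟨ι w, A w⟩`. For
`w = (λ - A)⁻¹ f` with `f ∈ D(A)` the resolvent commutes with `A`, so `A w = (λ - A)⁻¹ A f`,
and the Cauchy–Schwarz inequality gives `δ‖w‖² ≤ ‖(λ - A)⁻¹ A f‖ ‖(λ - A)⁻¹ f‖`. Bounding both
factors by `‖(λ - A)⁻¹‖ ≤ C / |λ|` and taking square roots yields the `L(D(A), V)` bound. -/

theorem mul_norm_sq_le_of_forall_eq_inner {V H : Type*} [Norm V]
    [NormedAddCommGroup H] [InnerProductSpace ℂ H] {a : V → V → ℂ} {δ : ℝ}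
    (hcoer : ∀ u : V, δ * ‖u‖ ^ 2 ≤ (a u u).re) (ι : V → H) {w : V} {h : H}
    (hw : ∀ φ : V, a w φ = inner ℂ (ι φ) h) :
    δ * ‖w‖ ^ 2 ≤ ‖ι w‖ * ‖h‖ :=
  calc δ * ‖w‖ ^ 2 ≤ (a w w).re := hcoer w
    _ = (inner ℂ (ι w) h).re := by rw [hw]
    _ ≤ ‖inner ℂ (ι w) h‖ := Complex.re_le_norm _
    _ ≤ ‖ι w‖ * ‖h‖ := norm_inner_le_norm _ _

theorem LinearMap.eq_apply_of_apply_smul_sub_eq {𝕜 E : Type*} [Ring 𝕜] [AddCommGroup E]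
    [Module 𝕜 E] (R : E →ₗ[𝕜] E) {c : 𝕜} {f g h : E} (hf : R (c • f - g) = f)
    (hh : c • R f - h = f) : h = R g := by
  rw [map_sub, map_smul] at hf
  exact (sub_right_injective (hf.trans hh.symm)).symm

theorem le_div_sqrt_mul_add_of_mul_sq_le {δ x r s t : ℝ} (hδ : 0 < δ) (hr : 0 ≤ r)
    (hs : 0 ≤ s) (ht : 0 ≤ t) (h : δ * x ^ 2 ≤ r * s * (r * t)) :
    x ≤ r / √δ * (s + t) := by
  refine le_of_sq_le_sq ?_ (by positivity)
  rw [mul_pow, div_pow, Real.sq_sqrt hδ.le, div_mul_eq_mul_div, le_div_iff₀' hδ]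
  calc δ * x ^ 2 ≤ r ^ 2 * (s * t) := by linarith
    _ ≤ r ^ 2 * (s + t) ^ 2 := by gcongr; nlinarith [mul_nonneg hs ht]

theorem resolvent_graph_norm_estimate_general
    {H V : Type*}
    [NormedAddCommGroup H] [InnerProductSpace ℂ H]
    [NormedAddCommGroup V] [InnerProductSpace ℂ V]
    (ι : V →L[ℂ] H) (hι : Function.Injective ι)
    (a : V → V → ℂ) (δa : ℝ) (hδa : 0 < δa)
    (hcoer : ∀ u : V, δa * ‖u‖ ^ 2 ≤ (a u u).re)
    (lam : ℂ) (C : ℝ) (hC : 0 < C)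
    (R : H →L[ℂ] H)
    (hR : ‖R‖ ≤ C / ‖lam‖)
    (hRinv : ∀ (v : V) (h : H), (∀ φ : V, a v φ = (inner ℂ (ι φ) h : ℂ)) →
      R (lam • ι v - h) = ι v)
    (hRsurj : ∀ y : H, ∃ (v : V) (h : H), (∀ φ : V, a v φ = (inner ℂ (ι φ) h : ℂ)) ∧
      ι v = R y ∧ lam • ι v - h = y) :
    ∃ C'' > 0, ∀ (vf : V) (hf : H), (∀ φ : V, a vf φ = (inner ℂ (ι φ) hf : ℂ)) →
      ∀ w : V, ι w = R (ι vf) →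
        δa * ‖w‖ ^ 2 ≤ ‖R hf‖ * ‖R (ι vf)‖ ∧
        ‖w‖ ≤ C'' / ‖lam‖ * (‖ι vf‖ + ‖hf‖) := by
  refine ⟨C / √δa, by positivity, fun vf hf hvf w hw => ?_⟩
  obtain ⟨v, h, hav, hRv, heq⟩ := hRsurj (ι vf)
  obtain rfl : w = v := hι (hw.trans hRv.symm)
  have hAw : h = R hf :=
    R.toLinearMap.eq_apply_of_apply_smul_sub_eq (hRinv vf hf hvf) (hw ▸ heq)
  have energy : δa * ‖w‖ ^ 2 ≤ ‖R hf‖ * ‖R (ι vf)‖ := by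
    rw [mul_comm ‖R hf‖, ← hAw, ← hw]
    exact mul_norm_sq_le_of_forall_eq_inner hcoer ι hav
  refine ⟨energy, ?_⟩
  calc ‖w‖ ≤ ‖R‖ / √δa * (‖ι vf‖ + ‖hf‖) := by
        refine le_div_sqrt_mul_add_of_mul_sq_le hδa (norm_nonneg R) (norm_nonneg _)
          (norm_nonneg _) (energy.trans ?_)
        rw [mul_comm]
        exact mul_le_mul (R.le_opNorm _) (R.le_opNorm _) (norm_nonneg _) (by positivity)
    _ ≤ C / ‖lam‖ / √δa * (‖ι vf‖ + ‖hf‖) := by gcongr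
    _ = C / √δa / ‖lam‖ * (‖ι vf‖ + ‖hf‖) := by rw [div_right_comm]

/-- Let `A` be an invertible operator associated with a bounded coercive
sesquilinear form `a` on `V ↪ H` with coercivity constant `δa`.  For `λ` in a sector of
resolvent boundedness, i.e. `‖(λI−A)⁻¹‖ ≤ C/|λ|` and `‖A(λI−A)⁻¹‖ ≤ C'`, one has
`‖(λI−A)⁻¹‖_{L(D(A),V)} ≤ C''/|λ|` (graph norm on `D(A)`); in particular
`δa‖(λI−A)⁻¹f‖_V² ≤ ‖(λI−A)⁻¹Af‖·‖(λI−A)⁻¹f‖` for `f ∈ D(A)`.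
(`f ∈ D(A)` with `Af = hf` is encoded by `∀ φ, a(vf,φ) = (hf, ιφ)`, `ι vf = f`; the
`V`-valued representative of `(λI−A)⁻¹ f` is `w` with `ι w = R f`.) -/
theorem resolvent_graph_norm_estimate
    {H V : Type*}
    [NormedAddCommGroup H] [InnerProductSpace ℂ H] [CompleteSpace H]
    [NormedAddCommGroup V] [InnerProductSpace ℂ V] [CompleteSpace V]
    (ι : V →L[ℂ] H) (hι : Function.Injective ι) (hdense : DenseRange ι)
    (a : V → V → ℂ) (M δa : ℝ) (hδa : 0 < δa)
    (hM : ∀ u v : V, ‖a u v‖ ≤ M * ‖u‖ * ‖v‖)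
    (hcoer : ∀ u : V, δa * ‖u‖ ^ 2 ≤ (a u u).re)
    (lam : ℂ) (hlam : lam ≠ 0) (C C' : ℝ) (hC : 0 < C) (hC' : 0 < C')
    (R : H →L[ℂ] H)
    (hR : ‖R‖ ≤ C / ‖lam‖)
    (hRinv : ∀ (v : V) (h : H), (∀ φ : V, a v φ = (inner ℂ (ι φ) h : ℂ)) →
      R (lam • ι v - h) = ι v)
    (hRsurj : ∀ y : H, ∃ (v : V) (h : H), (∀ φ : V, a v φ = (inner ℂ (ι φ) h : ℂ)) ∧
      ι v = R y ∧ lam • ι v - h = y)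
    (hAR : ∀ (y : H) (v : V) (h : H), (∀ φ : V, a v φ = (inner ℂ (ι φ) h : ℂ)) →
      ι v = R y → lam • ι v - h = y → ‖h‖ ≤ C' * ‖y‖) :
    ∃ C'' > 0, ∀ (vf : V) (hf : H), (∀ φ : V, a vf φ = (inner ℂ (ι φ) hf : ℂ)) →
      ∀ w : V, ι w = R (ι vf) →
        δa * ‖w‖ ^ 2 ≤ ‖R hf‖ * ‖R (ι vf)‖ ∧
        ‖w‖ ≤ C'' / ‖lam‖ * (‖ι vf‖ + ‖hf‖) :=
  resolvent_graph_norm_estimate_general ι hι a δa hδa hcoer lam C hC R hR hRinv hRsurj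
end
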